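/- arXiv:1410.0619 — 2 statements merged into one kernel-verified Lean document; each statement's English description precedes it below -/
import Mathlib

section
/- Consider the slab Z^{d-1} × {0,1,...,K} with nearest-neighbor adjacency, and a 2×...×2×(K+1) pillar P = Q × {0,...,K} where Q ⊂ Z^{d-1} is a product of d-1 intervals each of length 2 (for d-1 = 2: Q = {2i,2i+1}×{2j,2j+1}). Suppose the bottom layer Z^{d-1}×{0} is frozen at +1 and all vertices of P currently have spin +1. Then every non-frozen vertex of P has strictly more than half of its neighbors (in the slab) inside P with spin +1: a vertex in the top layer K has (for d-1=2) 3 neighbors in P out of 5 total, and a vertex in an intermediate layer has 4 neighbors in P out of 6 total. Hence under majority dynamics no vertex of P ever flips to -1. -/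
/-- Adjacency in the slab `ℤ² × {0,…,K}`: both endpoints lie in the slab and are
at `ℓ¹` distance 1.  Points of `ℤ × ℤ × ℤ` are `(x₁, x₂, k)` with height `k`. -/
def slabAdj (K : ℤ) (x y : ℤ × ℤ × ℤ) : Prop :=
  0 ≤ x.2.2 ∧ x.2.2 ≤ K ∧ 0 ≤ y.2.2 ∧ y.2.2 ≤ K ∧
    |x.1 - y.1| + |x.2.1 - y.2.1| + |x.2.2 - y.2.2| = 1

/-- The `2 × 2 × (K+1)` pillar `P = {2i, 2i+1} × {2j, 2j+1} × {0,…,K}`. -/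
def inPillar (K i j : ℤ) (x : ℤ × ℤ × ℤ) : Prop :=
  (x.1 = 2 * i ∨ x.1 = 2 * i + 1) ∧ (x.2.1 = 2 * j ∨ x.2.1 = 2 * j + 1) ∧
    0 ≤ x.2.2 ∧ x.2.2 ≤ K

/-!
A pillar vertex `x` above the frozen layer has exactly two slab-neighbours outside the pillar
(one horizontal step out of `Q` in each coordinate), and at least three inside it (its two
horizontal partners in `Q` and the vertex below).  So if the whole pillar is `+1`, at most two
neighbours of `x` are `-1` and at least three are `+1`; the majority rule keeps `x` at `+1`, and
the bottom vertices are frozen at `+1`.  By induction on time the pillar stays `+1` forever.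
-/

lemma ncard_neg_lt_ncard_pos {α : Type*} {N P : Set α} {f : α → ℤ} (hN : N.Finite)
    (hPN : P ⊆ N) (hP : ∀ y ∈ P, f y = 1) (hmaj : N.ncard < 2 * P.ncard) :
    {y | y ∈ N ∧ f y = -1}.ncard < {y | y ∈ N ∧ f y = 1}.ncard := by
  have hneg : {y | y ∈ N ∧ f y = -1}.ncard ≤ (N \ P).ncard :=
    Set.ncard_le_ncard (fun y ⟨hyN, hy⟩ => ⟨hyN, fun hyP => by simp [hP y hyP] at hy⟩)
      hN.sdiff
  have hpos : P.ncard ≤ {y | y ∈ N ∧ f y = 1}.ncard :=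
    Set.ncard_le_ncard (fun y hy => ⟨hPN hy, hP y hy⟩) (hN.subset fun _ hy => hy.1)
  have hsplit := Set.ncard_sdiff_add_ncard_of_subset hPN hN
  omega

section Neighbourhoods

variable {K i j a b k : ℤ}

lemma setOf_slabAdj_top (hK : 1 ≤ K) :
    {y | slabAdj K (a, b, K) y} =
      {(a + 1, b, K), (a - 1, b, K), (a, b + 1, K), (a, b - 1, K), (a, b, K - 1)} := by
  ext ⟨y₁, y₂, y₃⟩
  simp only [slabAdj, Set.mem_ofPred_eq, Set.mem_insert_iff, Set.mem_singleton_iff,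
    Prod.mk.injEq, Int.abs_eq_natAbs]
  omega

lemma ncard_setOf_slabAdj_top (hK : 1 ≤ K) : {y | slabAdj K (a, b, K) y}.ncard = 5 := by
  rw [setOf_slabAdj_top hK]
  repeat rw [Set.ncard_insert_of_notMem
    (by simp only [Set.mem_insert_iff, Set.mem_singleton_iff, Prod.mk.injEq]; omega)]
  rw [Set.ncard_singleton]

lemma setOf_slabAdj_interior (hk : 1 ≤ k) (hkK : k ≤ K - 1) :
    {y | slabAdj K (a, b, k) y} =
      {(a + 1, b, k), (a - 1, b, k), (a, b + 1, k), (a, b - 1, k), (a, b, k + 1),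
        (a, b, k - 1)} := by
  ext ⟨y₁, y₂, y₃⟩
  simp only [slabAdj, Set.mem_ofPred_eq, Set.mem_insert_iff, Set.mem_singleton_iff,
    Prod.mk.injEq, Int.abs_eq_natAbs]
  omega

lemma ncard_setOf_slabAdj_interior (hk : 1 ≤ k) (hkK : k ≤ K - 1) :
    {y | slabAdj K (a, b, k) y}.ncard = 6 := by
  rw [setOf_slabAdj_interior hk hkK]
  repeat rw [Set.ncard_insert_of_notMem
    (by simp only [Set.mem_insert_iff, Set.mem_singleton_iff, Prod.mk.injEq]; omega)]
  rw [Set.ncard_singleton]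

/-- `4i + 1 - a` is the partner of `a` in `{2i, 2i+1}`. -/
lemma setOf_slabAdj_inPillar_top (hK : 1 ≤ K) (ha : a = 2 * i ∨ a = 2 * i + 1)
    (hb : b = 2 * j ∨ b = 2 * j + 1) :
    {y | slabAdj K (a, b, K) y ∧ inPillar K i j y} =
      {(4 * i + 1 - a, b, K), (a, 4 * j + 1 - b, K), (a, b, K - 1)} := by
  ext ⟨y₁, y₂, y₃⟩
  simp only [slabAdj, inPillar, Set.mem_ofPred_eq, Set.mem_insert_iff, Set.mem_singleton_iff,
    Prod.mk.injEq, Int.abs_eq_natAbs]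
  omega

lemma ncard_setOf_slabAdj_inPillar_top (hK : 1 ≤ K) (ha : a = 2 * i ∨ a = 2 * i + 1)
    (hb : b = 2 * j ∨ b = 2 * j + 1) :
    {y | slabAdj K (a, b, K) y ∧ inPillar K i j y}.ncard = 3 := by
  rw [setOf_slabAdj_inPillar_top hK ha hb]
  repeat rw [Set.ncard_insert_of_notMem
    (by simp only [Set.mem_insert_iff, Set.mem_singleton_iff, Prod.mk.injEq]; omega)]
  rw [Set.ncard_singleton]

lemma setOf_slabAdj_inPillar_interior (hk : 1 ≤ k) (hkK : k ≤ K - 1)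
    (ha : a = 2 * i ∨ a = 2 * i + 1) (hb : b = 2 * j ∨ b = 2 * j + 1) :
    {y | slabAdj K (a, b, k) y ∧ inPillar K i j y} =
      {(4 * i + 1 - a, b, k), (a, 4 * j + 1 - b, k), (a, b, k + 1), (a, b, k - 1)} := by
  ext ⟨y₁, y₂, y₃⟩
  simp only [slabAdj, inPillar, Set.mem_ofPred_eq, Set.mem_insert_iff, Set.mem_singleton_iff,
    Prod.mk.injEq, Int.abs_eq_natAbs]
  omega

lemma ncard_setOf_slabAdj_inPillar_interior (hk : 1 ≤ k) (hkK : k ≤ K - 1)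
    (ha : a = 2 * i ∨ a = 2 * i + 1) (hb : b = 2 * j ∨ b = 2 * j + 1) :
    {y | slabAdj K (a, b, k) y ∧ inPillar K i j y}.ncard = 4 := by
  rw [setOf_slabAdj_inPillar_interior hk hkK ha hb]
  repeat rw [Set.ncard_insert_of_notMem
    (by simp only [Set.mem_insert_iff, Set.mem_singleton_iff, Prod.mk.injEq]; omega)]
  rw [Set.ncard_singleton]

end Neighbourhoods

lemma finite_setOf_slabAdj (K : ℤ) (x : ℤ × ℤ × ℤ) : {y | slabAdj K x y}.Finite := by
  refine (Set.finite_Icc (x - (1, 1, 1)) (x + (1, 1, 1))).subset fun y hy => ?_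
  obtain ⟨-, -, -, -, hd⟩ := hy
  simp only [Set.mem_Icc, Prod.le_def, Prod.fst_sub, Prod.snd_sub, Prod.fst_add, Prod.snd_add]
  grind

lemma ncard_setOf_slabAdj_lt_two_mul_inPillar {K i j : ℤ} (hK : 1 ≤ K) {x : ℤ × ℤ × ℤ}
    (hx : inPillar K i j x) (hk : 1 ≤ x.2.2) :
    {y | slabAdj K x y}.ncard < 2 * {y | slabAdj K x y ∧ inPillar K i j y}.ncard := by
  obtain ⟨a, b, k⟩ := x
  obtain ⟨ha, hb, -, hkK : k ≤ K⟩ := hx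
  change 1 ≤ k at hk
  obtain rfl | hkK := eq_or_lt_of_le hkK
  · rw [ncard_setOf_slabAdj_top hK, ncard_setOf_slabAdj_inPillar_top hK ha hb]
    norm_num
  · have hkK : k ≤ K - 1 := by omega
    rw [ncard_setOf_slabAdj_interior hk hkK, ncard_setOf_slabAdj_inPillar_interior hk hkK ha hb]
    norm_num

lemma pillar_eq_one_of_le {K i j : ℤ} (hK : 1 ≤ K) {σ : ℕ → ℤ × ℤ × ℤ → ℤ}
    (hfrozen : ∀ t (x : ℤ × ℤ × ℤ), x.2.2 = 0 → σ t x = 1)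
    (hrule : ∀ t (x : ℤ × ℤ × ℤ), 0 ≤ x.2.2 → x.2.2 ≤ K → σ t x = 1 →
      Set.ncard {y | slabAdj K x y ∧ σ t y = -1} <
        Set.ncard {y | slabAdj K x y ∧ σ t y = 1} →
      σ (t + 1) x = 1)
    {t₀ : ℕ} (hinit : ∀ x, inPillar K i j x → σ t₀ x = 1) :
    ∀ t, t₀ ≤ t → ∀ x, inPillar K i j x → σ t x = 1 := by
  intro t ht
  induction t, ht using Nat.le_induction with
  | base => exact hinit
  | succ t _ ih =>
    intro x hx
    obtain h0 | hk := eq_or_lt_of_le hx.2.2.1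
    · exact hfrozen _ _ h0.symm
    · exact hrule t x hx.2.2.1 hx.2.2.2 (ih x hx) <|
        ncard_neg_lt_ncard_pos (finite_setOf_slabAdj K x) (fun y hy => hy.1)
          (fun y hy => ih y hy.2) (ncard_setOf_slabAdj_lt_two_mul_inPillar hK hx hk)

theorem stmt_16_general (K : ℤ) (hK : 1 ≤ K) (i j : ℤ)
    (σ : ℕ → ℤ × ℤ × ℤ → ℤ)
    (hfrozen : ∀ t (x : ℤ × ℤ × ℤ), x.2.2 = 0 → σ t x = 1)
    (hrule : ∀ t (x : ℤ × ℤ × ℤ), 0 ≤ x.2.2 → x.2.2 ≤ K → σ t x = 1 →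
      Set.ncard {y | slabAdj K x y ∧ σ t y = -1} <
        Set.ncard {y | slabAdj K x y ∧ σ t y = 1} →
      σ (t + 1) x = 1)
    (t₀ : ℕ) (hinit : ∀ x, inPillar K i j x → σ t₀ x = 1) :
    ((∀ x, inPillar K i j x → x.2.2 = K →
        Set.ncard {y | slabAdj K x y} = 5 ∧
        Set.ncard {y | slabAdj K x y ∧ inPillar K i j y} = 3) ∧
      (∀ x, inPillar K i j x → 1 ≤ x.2.2 → x.2.2 ≤ K - 1 →
        Set.ncard {y | slabAdj K x y} = 6 ∧
        Set.ncard {y | slabAdj K x y ∧ inPillar K i j y} = 4)) ∧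
    (∀ t, t₀ ≤ t → ∀ x, inPillar K i j x → σ t x = 1) := by
  refine ⟨⟨?_, ?_⟩, pillar_eq_one_of_le hK hfrozen hrule hinit⟩
  · rintro ⟨a, b, k⟩ ⟨ha, hb, -, -⟩ (rfl : k = K)
    exact ⟨ncard_setOf_slabAdj_top hK, ncard_setOf_slabAdj_inPillar_top hK ha hb⟩
  · rintro ⟨a, b, k⟩ ⟨ha, hb, -, -⟩ hk hkK
    exact ⟨ncard_setOf_slabAdj_interior hk hkK,
      ncard_setOf_slabAdj_inPillar_interior hk hkK ha hb⟩

/-- In the slab `ℤ² × {0,…,K}` with the bottom layer frozen at `+1`, consider a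
`2×2×(K+1)` pillar `P`.  A top-layer vertex of `P` has `5` slab-neighbors, `3`
of them in `P`; an intermediate-layer vertex has `6` slab-neighbors, `4` of them
in `P`.  Hence, under majority dynamics (a vertex with a strict majority of
agreeing neighbors never flips), once all vertices of `P` are `+1` they remain
`+1` forever. -/
theorem stmt_16 (K : ℤ) (hK : 1 ≤ K) (i j : ℤ)
    (σ : ℕ → ℤ × ℤ × ℤ → ℤ)
    (hspin : ∀ t x, σ t x = 1 ∨ σ t x = -1)
    (hfrozen : ∀ t (x : ℤ × ℤ × ℤ), x.2.2 = 0 → σ t x = 1)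
    (hrule : ∀ t (x : ℤ × ℤ × ℤ), 0 ≤ x.2.2 → x.2.2 ≤ K → σ t x = 1 →
      Set.ncard {y | slabAdj K x y ∧ σ t y = -1} <
        Set.ncard {y | slabAdj K x y ∧ σ t y = 1} →
      σ (t + 1) x = 1)
    (t₀ : ℕ) (hinit : ∀ x, inPillar K i j x → σ t₀ x = 1) :
    ((∀ x, inPillar K i j x → x.2.2 = K →
        Set.ncard {y | slabAdj K x y} = 5 ∧
        Set.ncard {y | slabAdj K x y ∧ inPillar K i j y} = 3) ∧
      (∀ x, inPillar K i j x → 1 ≤ x.2.2 → x.2.2 ≤ K - 1 →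
        Set.ncard {y | slabAdj K x y} = 6 ∧
        Set.ncard {y | slabAdj K x y ∧ inPillar K i j y} = 4)) ∧
    (∀ t, t₀ ≤ t → ∀ x, inPillar K i j x → σ t x = 1) :=
  stmt_16_general K hK i j σ hfrozen hrule t₀ hinit
end

section
/- Let B_L = {-L,...,L}^d with M < L, and let the 'protected set' be B_L[M], the M-trimming of B_L. Suppose at time t_0 all spins in B_L are +1, all spins at certain frozen vertices (including, for each corner C^i and direction j, a frozen +1 vertex at C^i + m e^j with |m| ≤ M inside B_L) never change, and the dynamics is the zero-temperature majority dynamics. Then for all t ≥ t_0 and all x ∈ B_L[M], σ_x(t) = +1; i.e., the set of vertices that can ever become -1 after t_0 is contained in the union of the 2^d corner cubes of side M. -/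
/-- Nearest-neighbor adjacency on `ℤ^d` (`ℓ¹` distance 1). -/
def nbr1 (d : ℕ) (x y : Fin d → ℤ) : Prop := (∑ i, |x i - y i|) = 1

/-- The corner of `B_L = {-L,…,L}^d` with sign pattern `ε`. -/
def cornerPt (d : ℕ) (L : ℤ) (ε : Fin d → Bool) : Fin d → ℤ :=
  fun i => if ε i then L else -L

/-!
Let `P` be `B_L` minus the open boxes that the frozen vertices cut off at the corners; it
contains `B_L[M]`. A vertex of `P` that is not frozen has all `d` of its inward neighbours and
at least one outward neighbour in `P`, so at most `d - 1` of its neighbours lie outside `P`.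
Hence, as long as `P` is all `+1`, no vertex of `P` has the `d` minus neighbours it needs to
flip, and `P` stays `+1` forever by induction on time.
-/

open Function

theorem plus_stable_of_ncard_nbr_not_mem_lt {V : Type*} (adj : V → V → Prop)
    (σ : ℕ → V → ℤ) (k : ℕ)
    (hflip : ∀ t x, σ t x = 1 → σ (t + 1) x ≠ 1 → k ≤ {y | adj x y ∧ σ t y = -1}.ncard)
    (S F : Set V) (hF : ∀ t, ∀ x ∈ F, σ t x = 1)
    (hS : ∀ x ∈ S, x ∉ F → {y | adj x y ∧ y ∉ S}.Finite ∧ {y | adj x y ∧ y ∉ S}.ncard < k)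
    (t₀ : ℕ) (hinit : ∀ x ∈ S, σ t₀ x = 1) :
    ∀ t, t₀ ≤ t → ∀ x ∈ S, σ t x = 1 := by
  intro t ht
  induction t, ht using Nat.le_induction with
  | base => exact hinit
  | succ n _ ih =>
    intro x hx
    by_cases hxF : x ∈ F
    · exact hF _ x hxF
    by_contra hflipped
    obtain ⟨hfin, hlt⟩ := hS x hx hxF
    have hminus : {y | adj x y ∧ σ n y = -1} ⊆ {y | adj x y ∧ y ∉ S} := by
      rintro y ⟨hxy, hy⟩
      refine ⟨hxy, fun hyS => ?_⟩
      rw [ih y hyS] at hy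
      norm_num at hy
    have := hflip n x (ih x hx) hflipped
    have := Set.ncard_le_ncard hminus hfin
    omega

section Lattice

variable {d : ℕ}

lemma exists_eq_update_of_nbr1 {y z : Fin d → ℤ} (h : nbr1 d y z) :
    ∃ i v, |y i - v| = 1 ∧ z = update y i v := by
  obtain ⟨i, hi⟩ : ∃ i, y i ≠ z i := by
    by_contra! hyz
    simp [nbr1, hyz] at h
  have hsplit := Finset.add_sum_erase Finset.univ (fun m => |y m - z m|) (Finset.mem_univ i)
  have hone : 1 ≤ |y i - z i| := Int.one_le_abs (sub_ne_zero.mpr hi)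
  have hrest_nonneg : ∀ m ∈ Finset.univ.erase i, 0 ≤ |y m - z m| := fun m _ => abs_nonneg _
  have hrest : ∑ m ∈ Finset.univ.erase i, |y m - z m| = 0 := by
    have := Finset.sum_nonneg hrest_nonneg
    unfold nbr1 at h
    omega
  refine ⟨i, z i, by unfold nbr1 at h; omega, funext fun m => ?_⟩
  rcases eq_or_ne m i with rfl | hm
  · simp
  · have := (Finset.sum_eq_zero_iff_of_nonneg hrest_nonneg).mp hrest m (by simp [hm])
    rw [update_of_ne hm]
    grind

def signPattern (y : Fin d → ℤ) : Fin d → Bool := fun i => decide (0 < y i)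

/-- The unit step in coordinate `i` away from the origin; at `y i = 0` it points to `-1`,
towards the corner that `signPattern y` selects there. -/
def outStep (y : Fin d → ℤ) (i : Fin d) : ℤ := if 0 < y i then 1 else -1

lemma eq_sub_outStep_or_eq_add_outStep {y : Fin d → ℤ} {i : Fin d} {v : ℤ}
    (h : |y i - v| = 1) : v = y i - outStep y i ∨ v = y i + outStep y i := by
  unfold outStep
  grind

lemma finite_and_ncard_nbr1_not_mem_lt {S : Set (Fin d → ℤ)} {y : Fin d → ℤ}
    (hin : ∀ i, update y i (y i - outStep y i) ∈ S) {i₀ : Fin d}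
    (hout : update y i₀ (y i₀ + outStep y i₀) ∈ S) :
    {z | nbr1 d y z ∧ z ∉ S}.Finite ∧ {z | nbr1 d y z ∧ z ∉ S}.ncard < d := by
  set out : Finset (Fin d → ℤ) :=
    (Finset.univ.erase i₀).image fun i => update y i (y i + outStep y i)
  have hsub : {z | nbr1 d y z ∧ z ∉ S} ⊆ out := by
    rintro _ ⟨hyz, hzS⟩
    obtain ⟨i, v, hv, rfl⟩ := exists_eq_update_of_nbr1 hyz
    rcases eq_sub_outStep_or_eq_add_outStep hv with rfl | rfl
    · exact absurd (hin i) hzS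
    · have hi : i ≠ i₀ := by rintro rfl; exact hzS hout
      exact Finset.mem_image.mpr ⟨i, Finset.mem_erase.mpr ⟨hi, Finset.mem_univ i⟩, rfl⟩
  refine ⟨out.finite_toSet.subset hsub, ?_⟩
  calc {z | nbr1 d y z ∧ z ∉ S}.ncard ≤ out.card := by
        rw [← Set.ncard_coe_finset]; exact Set.ncard_le_ncard hsub out.finite_toSet
    _ ≤ (Finset.univ.erase i₀).card := Finset.card_image_le
    _ < d := by
      rw [Finset.card_erase_of_mem (Finset.mem_univ i₀), Finset.card_univ, Fintype.card_fin]
      exact Nat.sub_lt i₀.pos one_pos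

end Lattice

section ProtectedRegion

variable {d : ℕ} {L : ℤ}

lemma le_abs_sub_cornerPt_of_ne {ε : Fin d → Bool} {y : Fin d → ℤ} {i : Fin d}
    (h : ε i ≠ signPattern y i) : L ≤ |y i - cornerPt d L ε i| := by
  simp only [cornerPt, signPattern] at *
  grind

lemma abs_sub_cornerPt_signPattern {y : Fin d → ℤ} {i : Fin d} (h : |y i| ≤ L) :
    |y i - cornerPt d L (signPattern y) i| = L - |y i| := by
  simp only [cornerPt, signPattern]
  grind

variable (L) in
lemma sub_abs_le_abs_sub_cornerPt (ε : Fin d → Bool) (y : Fin d → ℤ) (i : Fin d) :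
    L - |y i| ≤ |y i - cornerPt d L ε i| := by
  simp only [cornerPt]
  grind

lemma le_abs_sub_outStep_sub_cornerPt {ε : Fin d → Bool} {y : Fin d → ℤ} {i : Fin d} {r : ℤ}
    (hr : r ≤ |y i - cornerPt d L ε i|) (hrL : r < L) (hy : |y i| ≤ L) :
    r ≤ |y i - outStep y i - cornerPt d L ε i| := by
  simp only [cornerPt, outStep] at *
  grind

lemma abs_add_outStep_sub_cornerPt_signPattern {y : Fin d → ℤ} {i : Fin d} (h : |y i| < L) :
    |y i + outStep y i - cornerPt d L (signPattern y) i| = L - |y i| - 1 := by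
  simp only [cornerPt, signPattern, outStep]
  grind

lemma eq_of_abs_sub_cornerPt_eq {ε : Fin d → Bool} {i : Fin d} {a b : ℤ} (ha : |a| ≤ L)
    (hb : |b| ≤ L) (h : |a - cornerPt d L ε i| = |b - cornerPt d L ε i|) : a = b := by
  simp only [cornerPt] at h
  grind

lemma abs_add_outStep (y : Fin d → ℤ) (i : Fin d) : |y i + outStep y i| = |y i| + 1 := by
  simp only [outStep]
  grind

lemma signPattern_update_add_outStep (y : Fin d → ℤ) (i : Fin d) :
    signPattern (update y i (y i + outStep y i)) = signPattern y := by
  funext m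
  rcases eq_or_ne m i with rfl | hm
  · simp only [signPattern, outStep, update_self]
    grind
  · simp only [signPattern, update_of_ne hm]

variable (L) in
/-- `B_L` minus, at each corner `ε`, the open box cut off by the frozen vertices `f ε j`. -/
def protectedRegion (f : (Fin d → Bool) → Fin d → Fin d → ℤ) : Set (Fin d → ℤ) :=
  {y | (∀ i, |y i| ≤ L) ∧ ∀ ε, ∃ j, |f ε j j - cornerPt d L ε j| ≤ |y j - cornerPt d L ε j|}

variable {f : (Fin d → Bool) → Fin d → Fin d → ℤ}

/-- Every corner other than `cornerPt d L (signPattern y)` differs from `y` in sign in some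
coordinate, where `y` lies at distance at least `L` from it. -/
lemma mem_protectedRegion_of_signPattern (hr : ∀ ε j, |f ε j j - cornerPt d L ε j| ≤ L)
    {y : Fin d → ℤ} (hbox : ∀ i, |y i| ≤ L) (j : Fin d)
    (hj : |f (signPattern y) j j - cornerPt d L (signPattern y) j| ≤
      |y j - cornerPt d L (signPattern y) j|) :
    y ∈ protectedRegion L f := by
  refine ⟨hbox, fun ε => ?_⟩
  by_cases hε : ε = signPattern y
  · exact ⟨j, hε ▸ hj⟩
  obtain ⟨m, hm⟩ := Function.ne_iff.mp hε
  exact ⟨m, (hr ε m).trans (le_abs_sub_cornerPt_of_ne hm)⟩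

lemma mem_protectedRegion_of_abs_le {M : ℤ} (hfM : ∀ ε j, |f ε j j - cornerPt d L ε j| ≤ M)
    {x : Fin d → ℤ} (hbox : ∀ i, |x i| ≤ L) {i : Fin d} (hi : |x i| ≤ L - M) :
    x ∈ protectedRegion L f :=
  ⟨hbox, fun ε => ⟨i, by linarith [hfM ε i, sub_abs_le_abs_sub_cornerPt L ε x i]⟩⟩

lemma update_sub_outStep_mem_protectedRegion (hr : ∀ ε j, |f ε j j - cornerPt d L ε j| < L)
    {y : Fin d → ℤ} (hy : y ∈ protectedRegion L f) (i : Fin d) :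
    update y i (y i - outStep y i) ∈ protectedRegion L f := by
  obtain ⟨hbox, hcorner⟩ := hy
  refine ⟨fun m => ?_, fun ε => ?_⟩
  · rcases eq_or_ne m i with rfl | hm
    · have hL := (abs_nonneg _).trans_lt (hr (signPattern y) m)
      simp only [update_self, outStep]
      grind
    · simpa only [update_of_ne hm] using hbox m
  · obtain ⟨j, hj⟩ := hcorner ε
    refine ⟨j, ?_⟩
    rcases eq_or_ne j i with rfl | hj'
    · simpa only [update_self] using le_abs_sub_outStep_sub_cornerPt hj (hr ε j) (hbox j)
    · simpa only [update_of_ne hj'] using hj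

lemma update_add_outStep_mem_protectedRegion (hr : ∀ ε j, |f ε j j - cornerPt d L ε j| ≤ L)
    {y : Fin d → ℤ} (hbox : ∀ i, |y i| ≤ L) {i : Fin d} (hi : |y i| < L) (j : Fin d)
    (hj : |f (signPattern y) j j - cornerPt d L (signPattern y) j| ≤
      |update y i (y i + outStep y i) j - cornerPt d L (signPattern y) j|) :
    update y i (y i + outStep y i) ∈ protectedRegion L f := by
  refine mem_protectedRegion_of_signPattern hr (fun m => ?_) j
    (by rwa [signPattern_update_add_outStep])
  rcases eq_or_ne m i with rfl | hm
  · rw [update_self, abs_add_outStep]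
    omega
  · simpa only [update_of_ne hm] using hbox m

lemma exists_update_add_outStep_mem_protectedRegion
    (hr : ∀ ε j, |f ε j j - cornerPt d L ε j| ≤ L)
    (hfix : ∀ ε j, ∀ i ≠ j, f ε j i = cornerPt d L ε i) (hfbox : ∀ ε j, |f ε j j| ≤ L)
    {y : Fin d → ℤ} (hy : y ∈ protectedRegion L f) (hyf : ∀ ε j, f ε j ≠ y) :
    ∃ i, update y i (y i + outStep y i) ∈ protectedRegion L f := by
  obtain ⟨hbox, hcorner⟩ := hy
  set ε := signPattern y
  obtain ⟨j, hj⟩ := hcorner ε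
  by_cases hfree : ∃ i ≠ j, |y i| < L
  · obtain ⟨i, hij, hi⟩ := hfree
    exact ⟨i, update_add_outStep_mem_protectedRegion hr hbox hi j
      (by rwa [update_of_ne hij.symm])⟩
  have hdist : |y j - cornerPt d L ε j| = L - |y j| := abs_sub_cornerPt_signPattern (hbox j)
  by_cases hslack : |f ε j j - cornerPt d L ε j| < |y j - cornerPt d L ε j|
  · have hj' : |y j| < L := by linarith [abs_nonneg (f ε j j - cornerPt d L ε j)]
    refine ⟨j, update_add_outStep_mem_protectedRegion hr hbox hj' j ?_⟩
    rw [update_self, abs_add_outStep_sub_cornerPt_signPattern hj']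
    change |f ε j j - cornerPt d L ε j| ≤ L - |y j| - 1
    omega
  push Not at hfree
  refine absurd (funext fun i => ?_) (hyf ε j)
  rcases eq_or_ne i j with rfl | hij
  · exact eq_of_abs_sub_cornerPt_eq (hfbox ε i) (hbox i) (le_antisymm hj (not_lt.mp hslack))
  · have hcorner_i := abs_sub_cornerPt_signPattern (hbox i)
    rw [hfix ε j i hij]
    grind

end ProtectedRegion

theorem stmt_19_general (d : ℕ) (L M : ℤ) (hML : M < L)
    (σ : ℕ → (Fin d → ℤ) → ℤ)
    (f : (Fin d → Bool) → Fin d → (Fin d → ℤ))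
    (hf : ∀ ε jj, (∀ i, i ≠ jj → f ε jj i = cornerPt d L ε i) ∧
      |f ε jj jj - cornerPt d L ε jj| ≤ M ∧ (∀ i, |f ε jj i| ≤ L))
    (hfrozen : ∀ t ε jj, σ t (f ε jj) = 1)
    (hflip : ∀ t x, σ t x = 1 → σ (t + 1) x ≠ 1 →
      d ≤ Set.ncard {y | nbr1 d x y ∧ σ t y = -1})
    (t₀ : ℕ) (hinit : ∀ x, (∀ i, |x i| ≤ L) → σ t₀ x = 1) :
    ∀ t, t₀ ≤ t → ∀ x : Fin d → ℤ,
      (∀ i, |x i| ≤ L) → ¬ (∀ i, L - M + 1 ≤ |x i|) → σ t x = 1 := by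
  have hfM ε j : |f ε j j - cornerPt d L ε j| ≤ M := (hf ε j).2.1
  have hfL ε j : |f ε j j - cornerPt d L ε j| < L := (hfM ε j).trans_lt hML
  intro t ht x hbox htrim
  obtain ⟨i, hi⟩ := not_forall.mp htrim
  refine plus_stable_of_ncard_nbr_not_mem_lt (nbr1 d) σ d hflip (protectedRegion L f)
    {y | ∃ ε j, f ε j = y} ?_ ?_ t₀ (fun y hy => hinit y hy.1) t ht x
    (mem_protectedRegion_of_abs_le hfM hbox (i := i) (by omega))
  · rintro t _ ⟨ε, j, rfl⟩
    exact hfrozen t ε j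
  · intro y hy hyf
    obtain ⟨i₀, hout⟩ := exists_update_add_outStep_mem_protectedRegion (fun ε j => (hfL ε j).le)
      (fun ε j => (hf ε j).1) (fun ε j => (hf ε j).2.2 j) hy (fun ε j h => hyf ⟨ε, j, h⟩)
    exact finite_and_ncard_nbr1_not_mem_lt (update_sub_outStep_mem_protectedRegion hfL hy) hout

/-- Zero-temperature majority dynamics on `ℤ^d`: a `+1` vertex can flip to `-1`
only if at least `d` of its `2d` nearest neighbors are `-1`.  Suppose that at
time `t₀` all spins in `B_L` are `+1` and that for each corner `Cⁱ` of `B_L`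
(sign pattern `ε`) and each direction `j` there is a frozen `+1` vertex
`f ε j = Cⁱ + m eʲ` with `|m| ≤ M`, inside `B_L`, whose spin never changes.
Then for all `t ≥ t₀` every vertex of the `M`-trimming `B_L[M]` (the box minus
its `2^d` corner cubes of side `M`) has spin `+1`; i.e. the vertices that can
ever become `-1` after `t₀` are contained in the corner cubes. -/
theorem stmt_19 (d : ℕ) (L M : ℤ) (hM : 0 < M) (hML : M < L)
    (σ : ℕ → (Fin d → ℤ) → ℤ)
    (hspin : ∀ t x, σ t x = 1 ∨ σ t x = -1)
    (f : (Fin d → Bool) → Fin d → (Fin d → ℤ))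
    (hf : ∀ ε jj, (∀ i, i ≠ jj → f ε jj i = cornerPt d L ε i) ∧
      |f ε jj jj - cornerPt d L ε jj| ≤ M ∧ (∀ i, |f ε jj i| ≤ L))
    (hfrozen : ∀ t ε jj, σ t (f ε jj) = 1)
    (hflip : ∀ t x, σ t x = 1 → σ (t + 1) x ≠ 1 →
      d ≤ Set.ncard {y | nbr1 d x y ∧ σ t y = -1})
    (t₀ : ℕ) (hinit : ∀ x, (∀ i, |x i| ≤ L) → σ t₀ x = 1) :
    ∀ t, t₀ ≤ t → ∀ x : Fin d → ℤ,
      (∀ i, |x i| ≤ L) → ¬ (∀ i, L - M + 1 ≤ |x i|) → σ t x = 1 :=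
  stmt_19_general d L M hML σ f hf hfrozen hflip t₀ hinit
end
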